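/- arXiv:1511.04915 — 2 statements merged into one kernel-verified Lean document; each statement's English description precedes it below -/
import Mathlib

section
/- Assume hypotheses (hp1): p_e ∈ C[0,∞) ∩ C¹(0,∞), p_e(0) = 0, p_e'(ρ) ≥ a₁ρ^{γ−1} − b for all ρ > 0, p_e(ρ) ≤ a₂ρ^γ + b for all ρ ≥ 0, with constants γ > 3/2, a₁, a₂, b > 0. Define the elastic potential P_e(ρ) = ∫₁^ρ p_e(z)/z² dz for ρ > 0. Then there exist constants c₁, c₂ > 0 such that ρ^γ ≤ c₁·ρP_e(ρ) + c₂(1 + ρ) for all ρ > 0. -/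
open Set

set_option maxHeartbeats 1000000

private lemma sq_div_four_le_exp {t : ℝ} (ht : 0 ≤ t) : t ^ 2 / 4 ≤ Real.exp t := by
  have h := Real.add_one_le_exp (t / 2)
  have h2 : Real.exp t = Real.exp (t / 2) * Real.exp (t / 2) := by
    rw [← Real.exp_add]; ring_nf
  nlinarith [Real.exp_pos (t / 2)]

/-- Under hypotheses (hp1) on the elastic pressure `p_e` (with `γ > 3/2`,
`a₁, a₂, b > 0`), and with the elastic potential `P_e(ρ) = ∫₁^ρ p_e(z)/z² dz`,
there exist constants `c₁, c₂ > 0` such that `ρ^γ ≤ c₁ ρ P_e(ρ) + c₂ (1 + ρ)` for all `ρ > 0`. -/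
theorem density_coercivity_from_elastic_potential
    (pe pe' : ℝ → ℝ) (a₁ a₂ b γ : ℝ)
    (ha₁ : 0 < a₁) (ha₂ : 0 < a₂) (hb : 0 < b) (hγ : 3 / 2 < γ)
    (hcont : ContinuousOn pe (Ici 0))
    (hderiv : ∀ ρ > (0 : ℝ), HasDerivAt pe (pe' ρ) ρ)
    (hderiv_cont : ContinuousOn pe' (Ioi 0))
    (hpe0 : pe 0 = 0)
    (hlb : ∀ ρ > (0 : ℝ), a₁ * ρ ^ (γ - 1) - b ≤ pe' ρ)
    (hub : ∀ ρ ≥ (0 : ℝ), pe ρ ≤ a₂ * ρ ^ γ + b) :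
    ∃ c₁ > (0 : ℝ), ∃ c₂ > (0 : ℝ), ∀ ρ > (0 : ℝ),
      ρ ^ γ ≤ c₁ * (ρ * ∫ z in (1 : ℝ)..ρ, pe z / z ^ 2) + c₂ * (1 + ρ) := by
  have hγ1 : (1 : ℝ) < γ := by linarith
  have hγ0 : (0 : ℝ) < γ := by linarith
  have hγm1 : (0 : ℝ) < γ - 1 := by linarith
  set K : ℝ := a₁ / (γ * (γ - 1)) with hKdef
  have hKpos : 0 < K := div_pos ha₁ (by positivity)
  set C : ℝ := 2 * b ^ 2 / (K * (γ - 1) ^ 2) with hCdef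
  have hCpos : 0 < C := by positivity
  -- continuity of z ↦ z ^ γ
  have hrpow_cont : Continuous fun z : ℝ => z ^ γ := by
    rw [continuous_iff_continuousAt]
    intro x
    exact Real.continuousAt_rpow_const x γ (Or.inr hγ0.le)
  -- Step 1: lower bound on pe
  have hpelow : ∀ z ≥ (0 : ℝ), a₁ / γ * z ^ γ - b * z ≤ pe z := by
    set q : ℝ → ℝ := fun z => pe z - (a₁ / γ * z ^ γ - b * z) with hq
    have hqmono : MonotoneOn q (Ici (0 : ℝ)) := by
      have hqderiv : ∀ x ∈ interior (Ici (0 : ℝ)),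
          HasDerivAt q (pe' x - (a₁ / γ * (γ * x ^ (γ - 1)) - b)) x := by
        intro x hx
        rw [interior_Ici] at hx
        have h1 := hderiv x hx
        have h2 : HasDerivAt (fun z : ℝ => z ^ γ) (γ * x ^ (γ - 1)) x :=
          Real.hasDerivAt_rpow_const (Or.inl (ne_of_gt hx))
        have h3 : HasDerivAt (fun z : ℝ => b * z) b x := by
          simpa using (hasDerivAt_id x).const_mul b
        exact h1.sub ((h2.const_mul (a₁ / γ)).sub h3)
      apply monotoneOn_of_deriv_nonneg (convex_Ici 0)
      · exact hcont.sub (((continuous_const.mul hrpow_cont).sub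
          (continuous_const.mul continuous_id)).continuousOn)
      · intro x hx
        exact ((hqderiv x hx).differentiableAt).differentiableWithinAt
      · intro x hx
        rw [(hqderiv x hx).deriv]
        rw [interior_Ici] at hx
        have := hlb x hx
        have hfield : a₁ / γ * (γ * x ^ (γ - 1)) = a₁ * x ^ (γ - 1) := by
          field_simp
        rw [hfield]
        linarith
    intro z hz
    have := hqmono self_mem_Ici hz hz
    have hq0 : q 0 = 0 := by
      simp [hq, hpe0, Real.zero_rpow (ne_of_gt hγ0)]
    rw [hq0] at this
    simp only [hq] at this
    linarith
  -- Step 2: log bound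
  have hlog : ∀ ρ ≥ (1 : ℝ), b * Real.log ρ ≤ K / 2 * ρ ^ (γ - 1) + C := by
    intro ρ hρ
    have hρ0 : (0 : ℝ) < ρ := by linarith
    have ht0 : 0 ≤ Real.log ρ := Real.log_nonneg hρ
    set t := Real.log ρ with htdef
    have hpow : ρ ^ (γ - 1) = Real.exp ((γ - 1) * t) := by
      rw [Real.rpow_def_of_pos hρ0, mul_comm]
    rw [hpow]
    have hexp : ((γ - 1) * t) ^ 2 / 4 ≤ Real.exp ((γ - 1) * t) :=
      sq_div_four_le_exp (by positivity)
    have hquad : b * t ≤ K / 2 * (((γ - 1) * t) ^ 2 / 4) + C := by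
      have hC2 : C * (K * (γ - 1) ^ 2) = 2 * b ^ 2 := by
        rw [hCdef]; field_simp
      nlinarith [sq_nonneg (K * (γ - 1) ^ 2 / 4 * t - b), hKpos,
        mul_pos hKpos (by positivity : (0:ℝ) < (γ - 1) ^ 2)]
    nlinarith [hexp, hKpos]
  -- the integrand is continuous away from 0
  have hf_cont : ContinuousOn (fun z => pe z / z ^ 2) (Ioi (0 : ℝ)) := by
    apply ContinuousOn.div (hcont.mono (Ioi_subset_Ici le_rfl))
      ((continuous_pow 2).continuousOn)
    intro x hx
    exact pow_ne_zero 2 (ne_of_gt hx)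
  refine ⟨2 / K, by positivity, 2 * (K + C) / K + 2 / K * (a₂ + b) + 1, by positivity, ?_⟩
  intro ρ hρ0
  rcases le_or_gt 1 ρ with hρ1 | hρ1
  · -- case ρ ≥ 1
    have hIcc : Icc (1 : ℝ) ρ ⊆ Ioi 0 := fun x hx => lt_of_lt_of_le one_pos hx.1
    have huIcc : uIcc (1 : ℝ) ρ = Icc 1 ρ := uIcc_of_le hρ1
    have hint_f : IntervalIntegrable (fun z => pe z / z ^ 2) MeasureTheory.volume 1 ρ := by
      apply ContinuousOn.intervalIntegrable
      rw [huIcc]; exact hf_cont.mono hIcc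
    have hc1 : ContinuousOn (fun z : ℝ => a₁ / γ * z ^ (γ - 2)) (Icc (1:ℝ) ρ) := by
      apply continuousOn_const.mul
      intro x hx
      exact (Real.continuousAt_rpow_const x (γ - 2)
        (Or.inl (ne_of_gt (hIcc hx)))).continuousWithinAt
    have hc2 : ContinuousOn (fun z : ℝ => b * z⁻¹) (Icc (1:ℝ) ρ) :=
      continuousOn_const.mul (continuousOn_inv₀.mono (fun x hx => ne_of_gt (hIcc hx)))
    have hint_g : IntervalIntegrable (fun z => a₁ / γ * z ^ (γ - 2) - b * z⁻¹)
        MeasureTheory.volume 1 ρ := by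
      apply ContinuousOn.intervalIntegrable
      rw [huIcc]; exact hc1.sub hc2
    have hmono : (∫ z in (1 : ℝ)..ρ, (a₁ / γ * z ^ (γ - 2) - b * z⁻¹))
        ≤ ∫ z in (1 : ℝ)..ρ, pe z / z ^ 2 := by
      apply intervalIntegral.integral_mono_on hρ1 hint_g hint_f
      intro z hz
      have hz0 : (0 : ℝ) < z := hIcc hz
      have hle := hpelow z hz0.le
      have key : (a₁ / γ * z ^ (γ - 2) - b * z⁻¹) * z ^ 2 = a₁ / γ * z ^ γ - b * z := by
        have hzg : z ^ (γ - 2) * z ^ 2 = z ^ γ := by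
          rw [← Real.rpow_natCast z 2, ← Real.rpow_add hz0]
          norm_num
        have hzi : z⁻¹ * z ^ 2 = z := by
          field_simp
        calc (a₁ / γ * z ^ (γ - 2) - b * z⁻¹) * z ^ 2
            = a₁ / γ * (z ^ (γ - 2) * z ^ 2) - b * (z⁻¹ * z ^ 2) := by ring
          _ = a₁ / γ * z ^ γ - b * z := by rw [hzg, hzi]
      calc (a₁ / γ * z ^ (γ - 2) - b * z⁻¹) = (a₁ / γ * z ^ γ - b * z) / z ^ 2 := by
            rw [eq_div_iff (by positivity : (z:ℝ) ^ 2 ≠ 0), key]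
        _ ≤ pe z / z ^ 2 := div_le_div_of_nonneg_right hle (by positivity) |>.trans_eq rfl
    have hcalc : (∫ z in (1 : ℝ)..ρ, (a₁ / γ * z ^ (γ - 2) - b * z⁻¹))
        = K * (ρ ^ (γ - 1) - 1) - b * Real.log ρ := by
      have h0 : (0 : ℝ) ∉ uIcc (1 : ℝ) ρ := by
        rw [huIcc]; intro h; exact absurd h.1 (by norm_num)
      have hi1 : IntervalIntegrable (fun z : ℝ => a₁ / γ * z ^ (γ - 2))
          MeasureTheory.volume 1 ρ := by
        apply ContinuousOn.intervalIntegrable; rw [huIcc]; exact hc1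
      have hi2 : IntervalIntegrable (fun z : ℝ => b * z⁻¹) MeasureTheory.volume 1 ρ := by
        apply ContinuousOn.intervalIntegrable; rw [huIcc]; exact hc2
      rw [intervalIntegral.integral_sub hi1 hi2,
        intervalIntegral.integral_const_mul, intervalIntegral.integral_const_mul,
        integral_rpow (Or.inl (by linarith : (-1 : ℝ) < γ - 2)),
        integral_inv h0]
      have he : γ - 2 + 1 = γ - 1 := by ring
      rw [he, Real.one_rpow, div_one]
      rw [hKdef]
      field_simp
    -- combine
    have hργ : ρ ^ γ = ρ * ρ ^ (γ - 1) := by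
      have h := Real.rpow_add hρ0 1 (γ - 1)
      rw [Real.rpow_one] at h
      have he : (1 : ℝ) + (γ - 1) = γ := by ring
      rw [he] at h
      exact h
    have hmain : K / 2 * ρ ^ γ - (K + C) * ρ ≤ ρ * ∫ z in (1 : ℝ)..ρ, pe z / z ^ 2 := by
      have hlogρ := hlog ρ hρ1
      have hlow : K / 2 * ρ ^ (γ - 1) - (K + C)
          ≤ ∫ z in (1 : ℝ)..ρ, pe z / z ^ 2 := by
        calc K / 2 * ρ ^ (γ - 1) - (K + C)
            ≤ K * (ρ ^ (γ - 1) - 1) - b * Real.log ρ := by nlinarith [hlogρ]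
          _ ≤ _ := by rw [← hcalc]; exact hmono
      calc K / 2 * ρ ^ γ - (K + C) * ρ = ρ * (K / 2 * ρ ^ (γ - 1) - (K + C)) := by
            rw [hργ]; ring
        _ ≤ ρ * ∫ z in (1 : ℝ)..ρ, pe z / z ^ 2 :=
            mul_le_mul_of_nonneg_left hlow hρ0.le
    set I : ℝ := ρ * ∫ z in (1 : ℝ)..ρ, pe z / z ^ 2 with hI
    have h1 : ρ ^ γ ≤ 2 / K * I + 2 * (K + C) / K * ρ := by
      have h' := mul_le_mul_of_nonneg_left hmain (by positivity : (0:ℝ) ≤ 2 / K)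
      have e : 2 / K * (K / 2 * ρ ^ γ - (K + C) * ρ) = ρ ^ γ - 2 * (K + C) / K * ρ := by
        field_simp
      rw [e] at h'
      linarith
    have hA : (0:ℝ) < 2 * (K + C) / K := by positivity
    have hB : (0:ℝ) < 2 / K * (a₂ + b) + 1 := by positivity
    have h2 : 2 * (K + C) / K * ρ
        ≤ (2 * (K + C) / K + 2 / K * (a₂ + b) + 1) * (1 + ρ) := by
      nlinarith [mul_nonneg hB.le hρ0.le, hA, hB, hρ0]
    linarith [h1, h2]
  · -- case ρ < 1
    have hIcc : Icc ρ (1 : ℝ) ⊆ Ioi 0 := fun x hx => lt_of_lt_of_le hρ0 hx.1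
    have huIcc : uIcc ρ (1 : ℝ) = Icc ρ 1 := uIcc_of_le hρ1.le
    have hint_f : IntervalIntegrable (fun z => pe z / z ^ 2) MeasureTheory.volume ρ 1 := by
      apply ContinuousOn.intervalIntegrable
      rw [huIcc]; exact hf_cont.mono hIcc
    have hint_g : IntervalIntegrable (fun z : ℝ => (a₂ + b) * z ^ (-2 : ℝ))
        MeasureTheory.volume ρ 1 := by
      apply ContinuousOn.intervalIntegrable
      rw [huIcc]
      apply continuousOn_const.mul
      intro x hx
      exact (Real.continuousAt_rpow_const x (-2)
        (Or.inl (ne_of_gt (hIcc hx)))).continuousWithinAt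
    have hmono : (∫ z in ρ..(1 : ℝ), pe z / z ^ 2)
        ≤ ∫ z in ρ..(1 : ℝ), (a₂ + b) * z ^ (-2 : ℝ) := by
      apply intervalIntegral.integral_mono_on hρ1.le hint_f hint_g
      intro z hz
      have hz0 : (0 : ℝ) < z := hIcc hz
      have hzg : z ^ γ ≤ 1 := Real.rpow_le_one hz0.le hz.2 hγ0.le
      have hpez : pe z ≤ a₂ + b := by
        have := hub z hz0.le
        nlinarith [ha₂]
      have hrw : z ^ (-2 : ℝ) = (z ^ 2)⁻¹ := by
        rw [show ((-2 : ℝ)) = -((2:ℕ):ℝ) by norm_num, Real.rpow_neg hz0.le,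
          Real.rpow_natCast]
      rw [hrw, div_eq_mul_inv]
      exact mul_le_mul_of_nonneg_right hpez (by positivity)
    have hcalc : (∫ z in ρ..(1 : ℝ), (a₂ + b) * z ^ (-2 : ℝ)) = (a₂ + b) * (ρ⁻¹ - 1) := by
      have h0 : (0 : ℝ) ∉ uIcc ρ (1 : ℝ) := by
        rw [huIcc]; intro h; exact absurd h.1 (not_le.mpr hρ0)
      rw [intervalIntegral.integral_const_mul,
        integral_rpow (Or.inr ⟨by norm_num, h0⟩)]
      have he : (-2 : ℝ) + 1 = -1 := by norm_num
      rw [he, show ((1:ℝ) ^ (-1:ℝ)) = 1 from Real.one_rpow _, Real.rpow_neg_one]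
      ring
    have hsymm : (∫ z in (1 : ℝ)..ρ, pe z / z ^ 2) = -∫ z in ρ..(1 : ℝ), pe z / z ^ 2 :=
      intervalIntegral.integral_symm ρ 1
    have hlow : -(a₂ + b) ≤ ρ * ∫ z in (1 : ℝ)..ρ, pe z / z ^ 2 := by
      rw [hsymm]
      have h1 : ρ * ∫ z in ρ..(1 : ℝ), pe z / z ^ 2 ≤ ρ * ((a₂ + b) * (ρ⁻¹ - 1)) := by
        apply mul_le_mul_of_nonneg_left _ hρ0.le
        rw [← hcalc]; exact hmono
      have h2 : ρ * ((a₂ + b) * (ρ⁻¹ - 1)) = (a₂ + b) * (1 - ρ) := by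
        field_simp
      rw [h2] at h1
      have h3 : ρ * -∫ z in ρ..(1 : ℝ), pe z / z ^ 2
          = -(ρ * ∫ z in ρ..(1 : ℝ), pe z / z ^ 2) := by ring
      rw [h3]
      nlinarith [ha₂, hb, hρ0]
    have hργ : ρ ^ γ ≤ 1 := Real.rpow_le_one hρ0.le hρ1.le hγ0.le
    set I : ℝ := ρ * ∫ z in (1 : ℝ)..ρ, pe z / z ^ 2 with hI
    have h1 : -(2 / K * (a₂ + b)) ≤ 2 / K * I := by
      have h := mul_le_mul_of_nonneg_left hlow (by positivity : (0:ℝ) ≤ 2 / K)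
      linarith [h]
    have hA : (0:ℝ) < 2 * (K + C) / K := by positivity
    have hc2 : (0:ℝ) < 2 * (K + C) / K + 2 / K * (a₂ + b) + 1 := by positivity
    have h2 : 2 * (K + C) / K + 2 / K * (a₂ + b) + 1
        ≤ (2 * (K + C) / K + 2 / K * (a₂ + b) + 1) * (1 + ρ) := by
      nlinarith [mul_nonneg hc2.le hρ0.le]
    linarith [h1, hργ, h2, hA]
end

section
/- Let h : [0,∞) → (0,∞) be twice continuously differentiable, nonincreasing, and satisfy h''(z)h(z) ≥ 2(h'(z))² for all z ≥ 0. Let μ > 0 and λ ≥ 0. Then the function F(θ, M) = h(θ)·((μ/2)(M : M) + λ(tr M)²), defined for θ ∈ [0,∞) and 3×3 real matrices M, is jointly convex on [0,∞) × ℝ^{3×3}. -/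
/-!
Writing `Q` for the quadratic form `(μ/2)(M : M) + λ(tr M)²`, we have `F(θ, M) = Q M / k θ` with
`k = 1 / h`. The condition `h'' h ≥ 2 (h')²` says exactly that `(1/h)'' ≤ 0`, so `k` is positive and
concave. A convex `Q` that is homogeneous of degree two is nonnegative and its perspective
`(M, t) ↦ Q M / t` is jointly convex and nonincreasing in `t > 0`, so substituting the positive
concave `k θ` for `t` preserves convexity.
-/

open Set Matrix

lemma concaveOn_inv_of_two_mul_sq_deriv_le {D : Set ℝ} (hD : Convex ℝ D) {h h' h'' : ℝ → ℝ}
    (hcont : ContinuousOn h D) (hpos : ∀ x ∈ D, 0 < h x)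
    (hd1 : ∀ x ∈ interior D, HasDerivAt h (h' x) x)
    (hd2 : ∀ x ∈ interior D, HasDerivAt h' (h'' x) x)
    (hconv : ∀ x ∈ interior D, 2 * h' x ^ 2 ≤ h'' x * h x) :
    ConcaveOn ℝ D fun x => (h x)⁻¹ := by
  have hne : ∀ x ∈ interior D, h x ≠ 0 := fun x hx => (hpos x (interior_subset hx)).ne'
  refine concaveOn_of_hasDerivWithinAt2_nonpos hD (hcont.inv₀ fun x hx => (hpos x hx).ne')
    (f' := fun x => -h' x / h x ^ 2)
    (f'' := fun x => (-h'' x * h x ^ 2 - -h' x * (2 * h x ^ 1 * h' x)) / (h x ^ 2) ^ 2)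
    (fun x hx => ((hd1 x hx).inv (hne x hx)).hasDerivWithinAt)
    (fun x hx => ((hd2 x hx).neg.div ((hd1 x hx).pow 2) (pow_ne_zero 2 (hne x hx))).hasDerivWithinAt)
    fun x hx => div_nonpos_of_nonpos_of_nonneg ?_ (by positivity)
  nlinarith [hconv x hx, hpos x (interior_subset hx)]

lemma convexOn_finset_sum {𝕜 E β ι : Type*} [Semiring 𝕜] [PartialOrder 𝕜] [AddCommMonoid E]
    [AddCommMonoid β] [PartialOrder β] [IsOrderedAddMonoid β] [SMul 𝕜 E] [Module 𝕜 β]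
    {s : Set E} (hs : Convex 𝕜 s) (t : Finset ι) {f : ι → E → β}
    (hf : ∀ i ∈ t, ConvexOn 𝕜 s (f i)) : ConvexOn 𝕜 s fun x => ∑ i ∈ t, f i x := by
  classical
  induction t using Finset.induction_on with
  | empty => simpa using convexOn_const (0 : β) hs
  | insert i t hi ih =>
    simp only [Finset.sum_insert hi]
    exact (hf i (t.mem_insert_self i)).add (ih fun j hj => hf j (Finset.mem_insert_of_mem hj))

section Homogeneous

variable {E : Type*} [AddCommGroup E] [Module ℝ E] {Q : E → ℝ}

lemma nonneg_of_convexOn_of_sq_homogeneous (hQ : ConvexOn ℝ univ Q)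
    (hhom : ∀ (c : ℝ) x, Q (c • x) = c ^ 2 * Q x) (x : E) : 0 ≤ Q x := by
  have h0 : Q 0 = 0 := by simpa using hhom 0 x
  have hneg : Q (-x) = Q x := by simpa using hhom (-1) x
  have hmid := hQ.2 (mem_univ x) (mem_univ (-x)) (by norm_num : (0 : ℝ) ≤ 1 / 2)
    (by norm_num : (0 : ℝ) ≤ 1 / 2) (by norm_num)
  simp only [smul_neg, add_neg_cancel, h0, hneg, smul_eq_mul] at hmid
  linarith

/-- Convexity of the perspective `(x, t) ↦ t • Q (x / t) = Q x / t`: write `a • x + b • y` as a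
convex combination of `(t / t₁) • x` and `(t / t₂) • y`, where `t = a * t₁ + b * t₂`. -/
lemma sq_homogeneous_div_le (hQ : ConvexOn ℝ univ Q) (hhom : ∀ (c : ℝ) x, Q (c • x) = c ^ 2 * Q x)
    {a b t₁ t₂ : ℝ} (ha : 0 ≤ a) (hb : 0 ≤ b) (hab : a + b = 1) (ht₁ : 0 < t₁) (ht₂ : 0 < t₂)
    (x y : E) : Q (a • x + b • y) / (a * t₁ + b * t₂) ≤ a * (Q x / t₁) + b * (Q y / t₂) := by
  set t := a * t₁ + b * t₂
  have ht : 0 < t := convex_Ioi (0 : ℝ) ht₁ ht₂ ha hb hab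
  have hsplit : a • x + b • y = (a * t₁ / t) • ((t / t₁) • x) + (b * t₂ / t) • ((t / t₂) • y) := by
    simp only [smul_smul]
    congr 2 <;> field_simp
  have hw : a * t₁ / t + b * t₂ / t = 1 := by rw [← add_div, div_self ht.ne']
  have hcombo := hQ.2 (mem_univ ((t / t₁) • x)) (mem_univ ((t / t₂) • y)) (by positivity)
    (by positivity) hw
  rw [← hsplit, smul_eq_mul, smul_eq_mul, hhom, hhom] at hcombo
  rw [div_le_iff₀ ht]
  calc Q (a • x + b • y) ≤ _ := hcombo
    _ = (a * (Q x / t₁) + b * (Q y / t₂)) * t := by field_simp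

end Homogeneous

lemma ConcaveOn.convexOn_div_of_sq_homogeneous {F E : Type*} [AddCommGroup F] [Module ℝ F]
    [AddCommGroup E] [Module ℝ E] {s : Set F} {k : F → ℝ} {Q : E → ℝ} (hk : ConcaveOn ℝ s k)
    (hk₀ : ∀ θ ∈ s, 0 < k θ) (hQ : ConvexOn ℝ univ Q)
    (hhom : ∀ (c : ℝ) x, Q (c • x) = c ^ 2 * Q x) :
    ConvexOn ℝ (s ×ˢ univ) fun p : F × E => Q p.2 / k p.1 := by
  refine ⟨hk.1.prod convex_univ, fun p hp q hq a b ha hb hab => ?_⟩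
  simp only [Prod.fst_add, Prod.snd_add, Prod.smul_fst, Prod.smul_snd, smul_eq_mul]
  have hk₁ := hk₀ p.1 hp.1
  have hk₂ := hk₀ q.1 hq.1
  calc Q (a • p.2 + b • q.2) / k (a • p.1 + b • q.1)
      ≤ Q (a • p.2 + b • q.2) / (a * k p.1 + b * k q.1) :=
        div_le_div_of_nonneg_left (nonneg_of_convexOn_of_sq_homogeneous hQ hhom _)
          (convex_Ioi (0 : ℝ) hk₁ hk₂ ha hb hab) (hk.2 hp.1 hq.1 ha hb hab)
    _ ≤ a * (Q p.2 / k p.1) + b * (Q q.2 / k q.1) :=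
        sq_homogeneous_div_le hQ hhom ha hb hab hk₁ hk₂ _ _

section Dissipation

variable {n : Type*} [Fintype n]

noncomputable def dissipation (μ lam : ℝ) (M : Matrix n n ℝ) : ℝ :=
  (μ / 2) * (∑ i, ∑ j, M i j * M i j) + lam * M.trace ^ 2

lemma dissipation_smul (μ lam c : ℝ) (M : Matrix n n ℝ) :
    dissipation μ lam (c • M) = c ^ 2 * dissipation μ lam M := by
  have hentry : ∀ i j, c * M i j * (c * M i j) = c ^ 2 * (M i j * M i j) := fun _ _ => by ring
  simp only [dissipation, Matrix.smul_apply, smul_eq_mul, trace_smul, hentry, ← Finset.mul_sum]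
  ring

lemma convexOn_dissipation {μ lam : ℝ} (hμ : 0 ≤ μ) (hlam : 0 ≤ lam) :
    ConvexOn ℝ univ (dissipation (n := n) μ lam) := by
  have hsq : ∀ ℓ : Matrix n n ℝ →ₗ[ℝ] ℝ, ConvexOn ℝ univ fun M => ℓ M ^ 2 := fun ℓ => by
    have := (even_two.convexOn_pow (𝕜 := ℝ)).comp_linearMap ℓ
    rwa [preimage_univ] at this
  have hfrob : ConvexOn ℝ univ fun M : Matrix n n ℝ => ∑ i, ∑ j, M i j * M i j :=
    convexOn_finset_sum convex_univ _ fun i _ => convexOn_finset_sum convex_univ _ fun j _ =>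
      (hsq (entryLinearMap ℝ ℝ i j)).congr fun M _ => sq (M i j)
  exact (hfrob.smul (by positivity)).add ((hsq (traceLinearMap n ℝ ℝ)).smul hlam)

end Dissipation

theorem renormalized_dissipation_convex_general
    (h h' h'' : ℝ → ℝ) (μ lam : ℝ) (hμ : 0 < μ) (hlam : 0 ≤ lam)
    (hpos : ∀ z ≥ (0 : ℝ), 0 < h z)
    (hd1 : ∀ z ≥ (0 : ℝ), HasDerivAt h (h' z) z)
    (hd2 : ∀ z ≥ (0 : ℝ), HasDerivAt h' (h'' z) z)
    (hconv : ∀ z ≥ (0 : ℝ), 2 * (h' z) ^ 2 ≤ h'' z * h z) :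
    ConvexOn ℝ ((Ici (0 : ℝ)) ×ˢ (univ : Set (Matrix (Fin 3) (Fin 3) ℝ)))
      (fun p : ℝ × Matrix (Fin 3) (Fin 3) ℝ =>
        h p.1 * ((μ / 2) * (∑ i, ∑ j, p.2 i j * p.2 i j) + lam * (p.2.trace) ^ 2)) := by
  have hinv : ConcaveOn ℝ (Ici 0) fun z => (h z)⁻¹ :=
    concaveOn_inv_of_two_mul_sq_deriv_le (convex_Ici 0)
      (fun z hz => (hd1 z hz).continuousAt.continuousWithinAt) hpos
      (fun z hz => hd1 z (interior_subset hz)) (fun z hz => hd2 z (interior_subset hz))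
      fun z hz => hconv z (interior_subset hz)
  have hpersp := hinv.convexOn_div_of_sq_homogeneous (fun z hz => inv_pos.2 (hpos z hz))
    (convexOn_dissipation (n := Fin 3) hμ.le hlam) (dissipation_smul μ lam)
  simpa only [dissipation, div_inv_eq_mul, mul_comm] using hpersp

/-- If `h : [0,∞) → (0,∞)` is twice continuously differentiable, nonincreasing,
and satisfies `h'' h ≥ 2 (h')²` on `[0,∞)`, and `μ > 0`, `λ ≥ 0`, then
`F(θ, M) = h(θ)((μ/2)(M : M) + λ(tr M)²)` is jointly convex on `[0,∞) × ℝ^{3×3}`. -/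
theorem renormalized_dissipation_convex
    (h h' h'' : ℝ → ℝ) (μ lam : ℝ) (hμ : 0 < μ) (hlam : 0 ≤ lam)
    (hpos : ∀ z ≥ (0 : ℝ), 0 < h z)
    (hd1 : ∀ z ≥ (0 : ℝ), HasDerivAt h (h' z) z)
    (hd2 : ∀ z ≥ (0 : ℝ), HasDerivAt h' (h'' z) z)
    (hd2_cont : ContinuousOn h'' (Ici 0))
    (hmono : AntitoneOn h (Ici 0))
    (hconv : ∀ z ≥ (0 : ℝ), 2 * (h' z) ^ 2 ≤ h'' z * h z) :
    ConvexOn ℝ ((Ici (0 : ℝ)) ×ˢ (univ : Set (Matrix (Fin 3) (Fin 3) ℝ)))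
      (fun p : ℝ × Matrix (Fin 3) (Fin 3) ℝ =>
        h p.1 * ((μ / 2) * (∑ i, ∑ j, p.2 i j * p.2 i j) + lam * (p.2.trace) ^ 2)) :=
  renormalized_dissipation_convex_general h h' h'' μ lam hμ hlam hpos hd1 hd2 hconv
end
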